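/- arXiv:hep-th/0408125 — 4 statements merged into one kernel-verified Lean document; each statement's English description precedes it below -/
import Mathlib

section
/- For every natural number L, the integral over [-1,1] of (P_L(t) - 1)/(1 - t) with respect to t equals -2·h(L), where h(L) = ∑_{k=1}^{L} 1/k is the L-th harmonic number (h(0) = 0). -/
/-- The Legendre polynomial `P_L` via Rodrigues' formula. -/
noncomputable def legendreP (L : ℕ) (x : ℝ) : ℝ :=
  (1 / ((2 : ℝ) ^ L * (Nat.factorial L : ℝ))) *
    iteratedDeriv L (fun t : ℝ => (t ^ 2 - 1) ^ L) x

/-- The `L`-th harmonic number `h(L) = ∑_{k=1}^L 1/k`, with `h(0) = 0`. -/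
noncomputable def harmonicR (L : ℕ) : ℝ := ∑ k ∈ Finset.range L, 1 / ((k : ℝ) + 1)

open Polynomial Finset

/-! With `u = (1 - t) / 2`, Rodrigues' formula for `P_L` becomes the one for the shifted Legendre
polynomial `S_L(u) = ∑ (-1)^k C(L,k) C(L+k,k) u^k`, so the integral equals
`∑_{k=1}^L (-1)^k C(L,k) C(L+k,k) / k`. Expand `C(L+k,k) = ∑_i C(L,i) C(k,i)` (Vandermonde).
The term `i = 0` gives `-h(L)` by the classical `h(L) = ∑_k (-1)^(k-1) C(L,k) / k`; for `i ≥ 1`,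
write `C(k,i) / k = C(k-1,i-1) / i` and use `∑_k (-1)^k C(L,k) C(k-1,i-1) = (-1)^i`, which
gives `-h(L)` once more. -/

theorem Nat.add_choose_left_eq_sum_range_choose_mul_choose (m n : ℕ) :
    (m + n).choose m = ∑ i ∈ range (m + 1), m.choose i * n.choose i := by
  rw [add_choose_eq, Nat.sum_antidiagonal_eq_sum_range_succ (fun i j => m.choose i * n.choose j),
    ← sum_range_reflect]
  refine sum_congr rfl fun i hmem => ?_
  have hi : i ≤ m := mem_range_succ_iff.mp hmem
  rw [Nat.succ_sub_one, Nat.sub_sub_self hi, choose_symm hi]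

theorem Int.alternating_sum_range_choose_mul_choose_of_lt {n i : ℕ} (h : i < n) :
    ∑ k ∈ Finset.range (n + 1), (-1 : ℤ) ^ k * n.choose k * k.choose i = 0 := by
  rw [← sum_range_add_sum_Ico _ (by omega : i ≤ n + 1), sum_Ico_eq_sum_range,
    sum_eq_zero fun k hk => by simp [Nat.choose_eq_zero_of_lt (mem_range.mp hk)], zero_add]
  have hterm : ∀ j ∈ Finset.range (n + 1 - i),
      (-1 : ℤ) ^ (i + j) * n.choose (i + j) * (i + j).choose i
      = (-1) ^ i * n.choose i * ((-1) ^ j * (n - i).choose j) := by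
    intro j _
    have := Nat.choose_mul (n := n) (k := i + j) (s := i) (by omega)
    rw [Nat.add_sub_cancel_left] at this
    rw [mul_assoc, ← Nat.cast_mul, this, pow_add]
    push_cast
    ring
  rw [sum_congr rfl hterm, ← mul_sum, show n + 1 - i = n - i + 1 by omega,
    Int.alternating_sum_range_choose_of_ne (by omega), mul_zero]

theorem Int.alternating_sum_range_choose_succ_mul_choose {n i : ℕ} (h : i < n) :
    ∑ k ∈ Finset.range n, (-1 : ℤ) ^ k * n.choose (k + 1) * k.choose i = (-1) ^ i := by
  induction n, h using Nat.le_induction with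
  | base =>
    rw [sum_range_succ,
      sum_eq_zero fun k hk => by simp [Nat.choose_eq_zero_of_lt (mem_range.mp hk)]]
    simp
  | succ n hn ih =>
    simp only [Nat.choose_succ_succ', Nat.cast_add, mul_add, add_mul, sum_add_distrib]
    rw [Int.alternating_sum_range_choose_mul_choose_of_lt hn, sum_range_succ, ih]
    simp

theorem harmonic_eq_alternating_sum_range_choose_succ (n : ℕ) :
    harmonic n = ∑ k ∈ range n, (-1 : ℚ) ^ k * n.choose (k + 1) / (k + 1) := by
  induction n with
  | zero => simp
  | succ n ih =>
    have hlast : ∑ k ∈ range (n + 1), (-1 : ℚ) ^ k * n.choose (k + 1) / (k + 1)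
        = ∑ k ∈ range n, (-1 : ℚ) ^ k * n.choose (k + 1) / (k + 1) := by
      simp [sum_range_succ]
    have hnew : ∑ k ∈ range (n + 1), (-1 : ℚ) ^ k * n.choose k / (k + 1) = 1 / (n + 1) := by
      have hsum := Int.alternating_sum_range_choose_succ_mul_choose (Nat.succ_pos n)
      simp only [Nat.choose_zero_right, Nat.cast_one, mul_one, pow_zero] at hsum
      have hcast : ∑ k ∈ range (n + 1), (-1 : ℚ) ^ k * (n + 1).choose (k + 1) = 1 := by
        exact_mod_cast hsum
      calc ∑ k ∈ range (n + 1), (-1 : ℚ) ^ k * n.choose k / (k + 1)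
          = (∑ k ∈ range (n + 1), (-1 : ℚ) ^ k * (n + 1).choose (k + 1)) / (n + 1) := by
            rw [sum_div]
            refine sum_congr rfl fun k _ => ?_
            have hk : ((n : ℚ) + 1) * n.choose k = (n + 1).choose (k + 1) * (k + 1) := by
              exact_mod_cast Nat.add_one_mul_choose_eq n k
            field_simp
            linear_combination hk
        _ = 1 / (n + 1) := by rw [hcast]
    simp only [Nat.choose_succ_succ', Nat.cast_add, mul_add, add_div, sum_add_distrib]
    rw [hlast, hnew, ← ih, harmonic_succ]
    push_cast
    ring

theorem Polynomial.sum_range_coeff_shiftedLegendre_succ_div (n : ℕ) :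
    ∑ k ∈ range n, ((shiftedLegendre n).coeff (k + 1) : ℚ) / (k + 1) = -2 * harmonic n := by
  have hsplit : ∀ k ∈ range n, ((shiftedLegendre n).coeff (k + 1) : ℚ) / (k + 1)
      = ∑ j ∈ range n, n.choose (j + 1) / (j + 1) * -((-1 : ℚ) ^ k * n.choose (k + 1) * k.choose j)
        - (-1) ^ k * n.choose (k + 1) / (k + 1) := by
    intro k _
    have hpascal : ∀ j, ((k + 1).choose (j + 1) : ℚ) = (k + 1) * k.choose j / (j + 1) := fun j => by
      rw [eq_div_iff (by positivity)]
      exact_mod_cast (Nat.add_one_mul_choose_eq k j).symm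
    rw [coeff_shiftedLegendre, Nat.add_choose_left_eq_sum_range_choose_mul_choose, sum_range_succ']
    push_cast
    simp only [hpascal, Nat.choose_zero_right, Nat.cast_one, mul_one]
    rw [mul_add, add_div, mul_sum, sum_div, sub_eq_add_neg]
    congr 1
    · refine sum_congr rfl fun j _ => ?_
      field_simp
      ring
    · ring
  have hinner : ∀ j ∈ range n, ∑ k ∈ range n, (-1 : ℚ) ^ k * n.choose (k + 1) * k.choose j
      = (-1) ^ j := fun j hj => by
    exact_mod_cast Int.alternating_sum_range_choose_succ_mul_choose (mem_range.mp hj)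
  have hsecond : ∑ j ∈ range n, ∑ k ∈ range n,
      n.choose (j + 1) / (j + 1) * -((-1 : ℚ) ^ k * n.choose (k + 1) * k.choose j)
        = -harmonic n := by
    rw [harmonic_eq_alternating_sum_range_choose_succ, ← sum_neg_distrib]
    refine sum_congr rfl fun j hj => ?_
    rw [← mul_sum, sum_neg_distrib, hinner j hj]
    ring
  rw [sum_congr rfl hsplit, sum_sub_distrib, sum_comm, hsecond,
    ← harmonic_eq_alternating_sum_range_choose_succ]
  ring

theorem Polynomial.coeff_shiftedLegendre_zero (n : ℕ) : (shiftedLegendre n).coeff 0 = 1 := by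
  simp [coeff_shiftedLegendre]

theorem Polynomial.aeval_shiftedLegendre_sub_one {A : Type*} [CommRing A] (n : ℕ) (u : A) :
    aeval u (shiftedLegendre n) - 1
      = u * ∑ k ∈ range n, ((shiftedLegendre n).coeff (k + 1) : A) * u ^ k := by
  rw [aeval_eq_sum_range, natDegree_shiftedLegendre, sum_range_succ', coeff_shiftedLegendre_zero,
    mul_sum]
  simp only [zsmul_eq_mul, pow_succ, pow_zero, Int.cast_one, one_mul, add_sub_cancel_right]
  exact sum_congr rfl fun k _ => by ring

theorem integral_one_sub_div_two_pow (k : ℕ) :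
    ∫ t in (-1 : ℝ)..1, ((1 - t) / 2) ^ k = 2 / (k + 1) := by
  have h : (fun t : ℝ => ((1 - t) / 2) ^ k) = fun t => (1 / 2 - t / 2) ^ k := by
    ext t; ring
  rw [h, intervalIntegral.integral_comp_sub_div (fun u => u ^ k) two_ne_zero]
  norm_num [integral_pow]
  field_simp

theorem Polynomial.iteratedDeriv_aeval {𝕜 R : Type*} [NontriviallyNormedField 𝕜] [CommSemiring R]
    [Algebra R 𝕜] (n : ℕ) (q : R[X]) :
    iteratedDeriv n (fun x : 𝕜 => aeval x q) = fun x => aeval x (derivative^[n] q) := by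
  induction n generalizing q with
  | zero => rfl
  | succ n ih =>
    have h : deriv (fun x : 𝕜 => aeval x q) = fun x => aeval x (derivative q) :=
      _root_.funext fun _ => Polynomial.deriv_aeval q
    rw [iteratedDeriv_succ', h, ih, Function.iterate_succ_apply]

theorem legendreP_eq_aeval_shiftedLegendre (L : ℕ) (t : ℝ) :
    legendreP L t = aeval ((1 - t) / 2) (shiftedLegendre L) := by
  set Q : ℤ[X] := X ^ L * (1 - X) ^ L
  -- `t ^ 2 - 1 = -4 u (1 - u)` for `u = (1 - t) / 2`
  have hsq : (fun t : ℝ => (t ^ 2 - 1) ^ L) =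
      fun t => (-4) ^ L * (fun z => aeval (1 / 2 - z) Q) (1 / 2 * t) := by
    ext t; simp only [Q, map_mul, map_pow, map_sub, aeval_X, map_one, ← mul_pow]; ring_nf
  have hrod : (L.factorial : ℝ) * aeval ((1 - t) / 2) (shiftedLegendre L)
      = aeval ((1 - t) / 2) (derivative^[L] Q) := by
    simpa using congrArg (aeval ((1 - t) / 2)) (factorial_mul_shiftedLegendre_eq L)
  rw [legendreP, hsq, iteratedDeriv_const_mul_field,
    iteratedDeriv_comp_const_mul (f := fun z => aeval (1 / 2 - z) Q)
      ((Q.contDiff_aeval _).comp (contDiff_const.sub contDiff_id)),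
    iteratedDeriv_comp_const_sub L (fun u => aeval u Q) (1 / 2), iteratedDeriv_aeval]
  have hu : (1 / 2 - 1 / 2 * t) = (1 - t) / 2 := by ring
  simp only [hu, smul_eq_mul, ← hrod]
  field_simp
  rw [← mul_pow, ← mul_pow]
  norm_num

theorem legendreP_sub_one_div_one_sub (L : ℕ) {t : ℝ} (ht : t ≠ 1) :
    (legendreP L t - 1) / (1 - t)
      = ∑ k ∈ range L, ((shiftedLegendre L).coeff (k + 1) : ℝ) / 2 * ((1 - t) / 2) ^ k := by
  rw [legendreP_eq_aeval_shiftedLegendre, aeval_shiftedLegendre_sub_one,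
    div_eq_iff (sub_ne_zero.mpr ht.symm), mul_sum, sum_mul]
  exact sum_congr rfl fun k _ => by ring

/-- For every natural number `L`,
`∫_{-1}^{1} (P_L(t) - 1)/(1 - t) dt = -2 h(L)`. -/
theorem legendre_integral_eq_neg_two_harmonic (L : ℕ) :
    ∫ t in (-1 : ℝ)..1, (legendreP L t - 1) / (1 - t) = -2 * harmonicR L := by
  have hae : ∀ᵐ t : ℝ, t ∈ Set.uIoc (-1) 1 → (legendreP L t - 1) / (1 - t)
      = ∑ k ∈ range L, ((shiftedLegendre L).coeff (k + 1) : ℝ) / 2 * ((1 - t) / 2) ^ k := by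
    filter_upwards [MeasureTheory.Measure.ae_ne MeasureTheory.volume 1] with t ht _
    exact legendreP_sub_one_div_one_sub L ht
  have hharmonic : harmonicR L = harmonic L := by
    simp [harmonicR, harmonic]
  have hcoeff : ∑ k ∈ range L, ((shiftedLegendre L).coeff (k + 1) : ℝ) / (k + 1)
      = -2 * harmonic L := by
    exact_mod_cast sum_range_coeff_shiftedLegendre_succ_div L
  rw [intervalIntegral.integral_congr_ae hae, intervalIntegral.integral_finsetSum fun k _ =>
    (Continuous.intervalIntegrable (by fun_prop) _ _)]
  simp only [intervalIntegral.integral_const_mul, integral_one_sub_div_two_pow]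
  rw [hharmonic, ← hcoeff]
  exact sum_congr rfl fun k _ => by field_simp
end

section
/- Fix a natural number L and a real number u with 0 < u < 2. Then, as the positive integer α tends to infinity, (−1)^{L+⌊uα⌋} · 2α · SixJ(α, L, ⌊uα⌋) converges to P_L(1 − u²/2), where P_L is the L-th Legendre polynomial. (This is the Racah asymptotic formula for the 6j-symbol {α α L; α α J} with J of order uα.) -/
/-!
Multiplied by `(-1) ^ (L + J) * 2α`, Racah's sum becomes a sum over `0 ≤ n ≤ L` in which every
factorial ratio is a rising product `(a + 1) ⋯ (a + k)` with `a / α` tending to `2 + u`, `2 - u`,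
`u` or `2`. Divided by `α ^ k` such a product tends to the `k`-th power of that limit, and the
powers of `α` balance, so the `n`-th term tends to
`(-1) ^ (L + n) * C(L, n) ^ 2 * 2 (2 + u) ^ n (2 - u) ^ n u ^ (2 (L - n)) / 2 ^ (2L + 1)`.
Leibniz's rule applied to `(x + 1) ^ L (x - 1) ^ L` in Rodrigues' formula gives
`P_L(x) = ∑ C(L, n) ^ 2 ((x - 1) / 2) ^ (L - n) ((x + 1) / 2) ^ n`, which at `x = 1 - u ^ 2 / 2`
is the same sum.
-/

open Filter

/-- The Racah 6j-symbol `{α α L; α α J}` via Racah's single-sum formula.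
Here `(−1)^{2α} = 1` since `α` is an integer, and the sum runs over
`n` with `max(0, L−J) ≤ n ≤ min(L, 2α−J)` (truncated ℕ-subtraction realizes
`max(0, L−J)` as `L − J`, and `J + n − L` realizes `J − L + n ≥ 0`). -/
noncomputable def SixJ (α L J : ℕ) : ℝ :=
  (-1 : ℝ) ^ J *
    ∑ n ∈ Finset.Icc (L - J) (min L (2 * α - J)),
      (-1 : ℝ) ^ n * (Nat.choose L n : ℝ) ^ 2 *
        (((Nat.factorial (2 * α - L) : ℝ) * (Nat.factorial (2 * α + J + n + 1) : ℝ) *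
            (Nat.factorial (2 * α - J) : ℝ) * (Nat.factorial J : ℝ) ^ 2) /
          ((Nat.factorial (2 * α + L + 1) : ℝ) * (Nat.factorial (2 * α + J + 1) : ℝ) *
            (Nat.factorial (2 * α - J - n) : ℝ) * (Nat.factorial (J + n - L) : ℝ) ^ 2))

open Finset Nat Polynomial Topology

theorem iteratedDeriv_polynomial_eval {𝕜 : Type*} [NontriviallyNormedField 𝕜]
    (p : 𝕜[X]) (k : ℕ) (x : 𝕜) :
    iteratedDeriv k (fun t => p.eval t) x = (derivative^[k] p).eval x := by
  induction k generalizing p with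
  | zero => simp
  | succ k ih =>
    have hderiv : deriv (fun t => p.eval t) = fun t => p.derivative.eval t :=
      funext fun _ => p.deriv
    rw [iteratedDeriv_succ', hderiv, ih, Function.iterate_succ_apply]

theorem Nat.descFactorial_mul_descFactorial_sub {n k : ℕ} (hk : k ≤ n) :
    n.descFactorial k * n.descFactorial (n - k) = n.choose k * n ! := by
  rw [descFactorial_eq_factorial_mul_choose, descFactorial_eq_factorial_mul_choose,
    choose_symm hk, ← choose_mul_factorial_mul_factorial hk]
  ring

theorem legendreP_eq_sum (L : ℕ) (x : ℝ) :
    legendreP L x = ∑ k ∈ range (L + 1),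
      (L.choose k : ℝ) ^ 2 * ((x - 1) / 2) ^ (L - k) * ((x + 1) / 2) ^ k := by
  have hpoly : (fun t : ℝ => (t ^ 2 - 1) ^ L)
      = fun t => ((X - C (-1)) ^ L * (X - C 1) ^ L : ℝ[X]).eval t := by
    funext t; simp [← mul_pow]; ring
  rw [legendreP, hpoly, iteratedDeriv_polynomial_eval, iterate_derivative_mul, eval_finsetSum,
    mul_sum]
  refine sum_congr rfl fun k hk => ?_
  have hkL : k ≤ L := mem_range_succ_iff.mp hk
  have hcoeff : (L.descFactorial (L - k) * L.descFactorial k : ℝ) = L.choose k * L ! := by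
    rw [mul_comm]; exact_mod_cast descFactorial_mul_descFactorial_sub hkL
  have h2 : (2 : ℝ) ^ L = 2 ^ (L - k) * 2 ^ k := by rw [← pow_add, Nat.sub_add_cancel hkL]
  simp only [iterate_derivative_X_sub_pow, Nat.sub_sub_self hkL, eval_natCast, eval_mul, eval_pow,
    eval_sub, eval_X, eval_C, nsmul_eq_mul, div_pow, h2]
  field_simp
  linear_combination ((x - 1) ^ (L - k) * (x + 1) ^ k * L.choose k) * hcoeff

theorem legendreP_one_sub_sq_div_two (L : ℕ) (u : ℝ) :
    legendreP L (1 - u ^ 2 / 2) = ∑ n ∈ range (L + 1), (-1 : ℝ) ^ (L + n) * (L.choose n : ℝ) ^ 2 *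
      (2 * (2 + u) ^ n * (2 - u) ^ n * (u ^ (L - n)) ^ 2 / 2 ^ (2 * L + 1)) := by
  rw [legendreP_eq_sum]
  refine sum_congr rfl fun n hn => ?_
  have hnL : n ≤ L := mem_range_succ_iff.mp hn
  have hsign : (-1 : ℝ) ^ (L + n) = (-1) ^ (L - n) := by
    rw [show L + n = L - n + 2 * n by omega, pow_add, pow_mul, neg_one_sq, one_pow, mul_one]
  have htwo : (2 : ℝ) ^ (2 * L + 1) = 2 * 4 ^ (L - n) * 4 ^ n := by
    rw [show 2 * L + 1 = 2 * (L - n + n) + 1 by omega, pow_succ, pow_mul, pow_add]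
    ring
  rw [hsign, htwo, show (1 - u ^ 2 / 2 - 1) / 2 = -1 * (u ^ 2 / 4) by ring,
    show (1 - u ^ 2 / 2 + 1) / 2 = (2 + u) * (2 - u) / 4 by ring, mul_pow, div_pow, div_pow,
    mul_pow (2 + u)]
  field_simp
  ring

-- `= (a + k)! / (a ! * x ^ k)`
noncomputable def scaledAscFactorial (a k : ℕ) (x : ℝ) : ℝ :=
  ((a + 1).ascFactorial k : ℝ) / x ^ k

theorem scaledAscFactorial_eq_prod (a k : ℕ) (x : ℝ) :
    scaledAscFactorial a k x = ∏ i ∈ range k, ((a : ℝ) / x + (1 + i) / x) := by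
  simp [scaledAscFactorial, ascFactorial_eq_prod_range, prod_div_distrib, ← add_div, add_assoc]

theorem tendsto_scaledAscFactorial {ι : Type*} {l : Filter ι} {a : ι → ℕ} {x : ι → ℝ} {c : ℝ}
    (hx : Tendsto x l atTop) (ha : Tendsto (fun i => (a i : ℝ) / x i) l (𝓝 c)) (k : ℕ) :
    Tendsto (fun i => scaledAscFactorial (a i) k (x i)) l (𝓝 (c ^ k)) := by
  have hc : c ^ k = ∏ _i ∈ range k, (c + 0) := by simp
  simp only [scaledAscFactorial_eq_prod, hc]
  exact tendsto_finsetProd _ fun i _ => ha.add (tendsto_const_nhds.div_atTop hx)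

theorem tendsto_affine_div {ι : Type*} {l : Filter ι} {f x : ι → ℝ} {c d : ℝ}
    (hx : Tendsto x l atTop) (hf : Tendsto (fun i => f i / x i) l (𝓝 c)) (p s r : ℝ)
    (hd : p + s * c = d) :
    Tendsto (fun i => (p * x i + s * f i + r) / x i) l (𝓝 d) := by
  have h : Tendsto (fun i => p + s * (f i / x i) + r / x i) l (𝓝 (p + s * c + 0)) :=
    (tendsto_const_nhds.add (hf.const_mul s)).add (tendsto_const_nhds.div_atTop hx)
  rw [add_zero, hd] at h
  refine h.congr' ?_
  filter_upwards [hx.eventually_gt_atTop 0] with i hi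
  field_simp

theorem mul_factorial_quotient_eq {x : ℝ} (hx : x ≠ 0) (a b c d n m : ℕ) :
    2 * x * ((d ! * (a + n)! * (b + n)! * ((c + m)! : ℝ) ^ 2) /
        ((d + (2 * (n + m) + 1))! * a ! * b ! * (c ! : ℝ) ^ 2)) =
      2 * scaledAscFactorial a n x * scaledAscFactorial b n x * scaledAscFactorial c m x ^ 2 /
        scaledAscFactorial d (2 * (n + m) + 1) x := by
  simp only [scaledAscFactorial, ← factorial_mul_ascFactorial, cast_mul]
  have : ((d + 1).ascFactorial (2 * (n + m) + 1) : ℝ) ≠ 0 := by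
    exact_mod_cast (ascFactorial_pos _ _).ne'
  field_simp
  ring

theorem two_mul_sixJ_quotient_eq {α L J n : ℕ} (hα : α ≠ 0) (hn : n ≤ L) (hLJ : L ≤ J)
    (hJL : J + L ≤ 2 * α) :
    2 * (α : ℝ) *
      (((2 * α - L)! : ℝ) * (2 * α + J + n + 1)! * (2 * α - J)! * (J ! : ℝ) ^ 2 /
        (((2 * α + L + 1)! : ℝ) * (2 * α + J + 1)! * (2 * α - J - n)! * ((J + n - L)! : ℝ) ^ 2)) =
      2 * scaledAscFactorial (2 * α + J + 1) n α * scaledAscFactorial (2 * α - J - n) n α *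
          scaledAscFactorial (J + n - L) (L - n) α ^ 2 /
        scaledAscFactorial (2 * α - L) (2 * L + 1) α := by
  set b := 2 * α - J - n
  set c := J + n - L with hc
  rw [show 2 * α + J + n + 1 = 2 * α + J + 1 + n by omega, show 2 * α - J = b + n by omega,
    show J ! = (c + (L - n))! by rw [hc]; congr 1; omega,
    show 2 * α + L + 1 = 2 * α - L + (2 * (n + (L - n)) + 1) by omega,
    mul_factorial_quotient_eq (cast_ne_zero.mpr hα), show n + (L - n) = L by omega]

theorem neg_one_pow_mul_sixJ_eq_sum {α L J : ℕ} (hα : α ≠ 0) (hLJ : L ≤ J)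
    (hJL : J + L ≤ 2 * α) :
    (-1 : ℝ) ^ (L + J) * (2 * α) * SixJ α L J =
      ∑ n ∈ range (L + 1), (-1 : ℝ) ^ (L + n) * (L.choose n : ℝ) ^ 2 *
        (2 * scaledAscFactorial (2 * α + J + 1) n α * scaledAscFactorial (2 * α - J - n) n α *
            scaledAscFactorial (J + n - L) (L - n) α ^ 2 /
          scaledAscFactorial (2 * α - L) (2 * L + 1) α) := by
  have hrange : Icc (L - J) (min L (2 * α - J)) = range (L + 1) := by
    rw [Nat.sub_eq_zero_of_le hLJ, min_eq_left (by omega), range_eq_Ico]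
    rfl
  have hsign : (-1 : ℝ) ^ (L + J) * (-1) ^ J = (-1) ^ L := by
    rw [pow_add, mul_assoc, ← pow_add, Even.neg_one_pow ⟨J, rfl⟩, mul_one]
  rw [SixJ, hrange, mul_sum, mul_sum]
  refine sum_congr rfl fun n hn => ?_
  rw [← two_mul_sixJ_quotient_eq hα (mem_range_succ_iff.mp hn) hLJ hJL, pow_add _ L n, ← hsign]
  ring

theorem tendsto_two_mul_sixJ_quotient {L n : ℕ} {J : ℕ → ℕ} {u : ℝ} (hn : n ≤ L)
    (hJ : Tendsto (fun α : ℕ => (J α : ℝ) / α) atTop (𝓝 u))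
    (hbounds : ∀ᶠ α in atTop, L ≤ J α ∧ J α + L ≤ 2 * α) :
    Tendsto (fun α : ℕ =>
        2 * scaledAscFactorial (2 * α + J α + 1) n α * scaledAscFactorial (2 * α - J α - n) n α *
            scaledAscFactorial (J α + n - L) (L - n) α ^ 2 /
          scaledAscFactorial (2 * α - L) (2 * L + 1) α)
      atTop (𝓝 (2 * (2 + u) ^ n * (2 - u) ^ n * (u ^ (L - n)) ^ 2 / 2 ^ (2 * L + 1))) := by
  have hx := tendsto_natCast_atTop_atTop (R := ℝ)
  have ha : Tendsto (fun α : ℕ => ((2 * α + J α + 1 : ℕ) : ℝ) / α) atTop (𝓝 (2 + u)) :=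
    (tendsto_affine_div hx hJ 2 1 1 (by ring)).congr fun α => by push_cast; ring
  have hb : Tendsto (fun α : ℕ => ((2 * α - J α - n : ℕ) : ℝ) / α) atTop (𝓝 (2 - u)) := by
    refine (tendsto_affine_div hx hJ 2 (-1) (-n) (by ring)).congr' ?_
    filter_upwards [hbounds] with α ⟨_, hJL⟩
    rw [Nat.cast_sub (by omega), Nat.cast_sub (by omega)]
    push_cast; ring
  have hc : Tendsto (fun α : ℕ => ((J α + n - L : ℕ) : ℝ) / α) atTop (𝓝 u) := by
    refine (tendsto_affine_div hx hJ 0 1 (n - L) (by ring)).congr' ?_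
    filter_upwards [hbounds] with α ⟨hLJ, _⟩
    rw [Nat.cast_sub (by omega)]
    push_cast; ring
  have hd : Tendsto (fun α : ℕ => ((2 * α - L : ℕ) : ℝ) / α) atTop (𝓝 2) := by
    refine (tendsto_affine_div hx hJ 2 0 (-L) (by ring)).congr' ?_
    filter_upwards [hbounds] with α ⟨_, hJL⟩
    rw [Nat.cast_sub (by omega)]
    push_cast; ring
  exact ((((tendsto_scaledAscFactorial hx ha n).const_mul 2).mul
    (tendsto_scaledAscFactorial hx hb n)).mul ((tendsto_scaledAscFactorial hx hc (L - n)).pow 2)).div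
    (tendsto_scaledAscFactorial hx hd _) (by positivity)

theorem eventually_le_floor_mul_and_floor_mul_add_le {u : ℝ} (hu0 : 0 < u) (hu2 : u < 2)
    (L : ℕ) : ∀ᶠ α : ℕ in atTop, L ≤ ⌊u * α⌋₊ ∧ ⌊u * α⌋₊ + L ≤ 2 * α := by
  have hfloor : Tendsto (fun α : ℕ => ⌊u * α⌋₊) atTop atTop :=
    (tendsto_nat_floor_mul_atTop u hu0).comp tendsto_natCast_atTop_atTop
  have hgap : Tendsto (fun α : ℕ => (2 - u) * (α : ℝ)) atTop atTop :=
    tendsto_natCast_atTop_atTop.const_mul_atTop (by linarith)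
  filter_upwards [hfloor.eventually_ge_atTop L, hgap.eventually_ge_atTop (L : ℝ)] with α hL hα
  refine ⟨hL, ?_⟩
  have hfl : (⌊u * α⌋₊ : ℝ) ≤ u * α := Nat.floor_le (by positivity)
  exact_mod_cast (by linarith : (⌊u * α⌋₊ : ℝ) + L ≤ 2 * α)

/-- Racah's asymptotic formula: for fixed `L` and `0 < u < 2`, as the positive
integer `α → ∞`, `(−1)^{L+⌊uα⌋} · 2α · SixJ(α, L, ⌊uα⌋)` converges to
`P_L(1 − u²/2)`. -/
theorem racah_sixj_asymptotics (L : ℕ) (u : ℝ) (hu0 : 0 < u) (hu2 : u < 2) :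
    Tendsto (fun α : ℕ =>
        (-1 : ℝ) ^ (L + ⌊u * (α : ℝ)⌋₊) * (2 * (α : ℝ)) * SixJ α L ⌊u * (α : ℝ)⌋₊)
      atTop (nhds (legendreP L (1 - u ^ 2 / 2))) := by
  have hJ : Tendsto (fun α : ℕ => (⌊u * α⌋₊ : ℝ) / α) atTop (𝓝 u) :=
    (tendsto_nat_floor_mul_div_atTop hu0.le).comp tendsto_natCast_atTop_atTop
  have hbounds := eventually_le_floor_mul_and_floor_mul_add_le hu0 hu2 L
  rw [legendreP_one_sub_sq_div_two]
  refine (tendsto_finsetSum _ fun n hn => (tendsto_two_mul_sixJ_quotient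
    (mem_range_succ_iff.mp hn) hJ hbounds).const_mul _).congr' ?_
  filter_upwards [hbounds, eventually_ne_atTop 0] with α ⟨hLJ, hJL⟩ hα
  exact (neg_one_pow_mul_sixJ_eq_sum hα hLJ hJL).symm
end

section
/- Linear divergence of the planar tadpole on the q-deformed fuzzy sphere: for every real q > 1 and every real c > 0, the terms [2L+1]_q/([L]_q·[L+1]_q + c) converge to q − q^{−1} as L → ∞, and consequently lim_{N→∞} (1/N) · ∑_{L=0}^{N} [2L+1]_q/([L]_q·[L+1]_q + c) = q − q^{−1}; in particular the sum ∑_{L=0}^{N} [2L+1]_q/([L]_q·[L+1]_q + c) diverges linearly in N. -/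
open Filter

/-- The q-number `[n]_q = (qⁿ − q⁻ⁿ)/(q − q⁻¹)` for real `q` and `n : ℕ`. -/
noncomputable def qnum (q : ℝ) (n : ℕ) : ℝ := (q ^ n - q⁻¹ ^ n) / (q - q⁻¹)

/-- Linear divergence of the planar tadpole on the q-deformed fuzzy sphere:
for `q > 1` and `c > 0`, the terms `[2L+1]_q/([L]_q [L+1]_q + c)` converge to
`q − q⁻¹` as `L → ∞`; consequently
`(1/N) ∑_{L=0}^{N} [2L+1]_q/([L]_q [L+1]_q + c) → q − q⁻¹`, and in particular
the sum `∑_{L=0}^{N} [2L+1]_q/([L]_q [L+1]_q + c)` diverges (linearly in `N`). -/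
theorem planar_tadpole_linear_divergence (q : ℝ) (hq : 1 < q) (c : ℝ) (hc : 0 < c) :
    Tendsto (fun L : ℕ => qnum q (2 * L + 1) / (qnum q L * qnum q (L + 1) + c))
      atTop (nhds (q - q⁻¹)) ∧
    Tendsto (fun N : ℕ =>
        1 / (N : ℝ) *
          ∑ L ∈ Finset.range (N + 1), qnum q (2 * L + 1) / (qnum q L * qnum q (L + 1) + c))
      atTop (nhds (q - q⁻¹)) ∧
    Tendsto (fun N : ℕ =>
        ∑ L ∈ Finset.range (N + 1), qnum q (2 * L + 1) / (qnum q L * qnum q (L + 1) + c))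
      atTop atTop := by
  have hq0 : (0:ℝ) < q := lt_trans one_pos hq
  have hqi : q⁻¹ < 1 := by
    rw [inv_lt_one_iff₀]; right; exact hq
  have hqi0 : (0:ℝ) < q⁻¹ := inv_pos.2 hq0
  set d : ℝ := q - q⁻¹ with hd
  have hd0 : (0:ℝ) < d := sub_pos.2 (lt_trans hqi hq)
  set u : ℕ → ℝ := fun L => q⁻¹ ^ (2 * L + 1) with hu
  have hu0 : ∀ L, 0 < u L := fun L => pow_pos hqi0 _
  -- positivity of the denominator
  have hqnum_nonneg : ∀ n : ℕ, 0 ≤ qnum q n := by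
    intro n
    apply div_nonneg _ hd0.le
    have : q⁻¹ ^ n ≤ q ^ n := pow_le_pow_left₀ hqi0.le (le_of_lt (lt_trans hqi hq)) n
    linarith
  have hD : ∀ L : ℕ, 0 < qnum q L * qnum q (L + 1) + c := fun L =>
    add_pos_of_nonneg_of_pos (mul_nonneg (hqnum_nonneg L) (hqnum_nonneg (L + 1))) hc
  -- the key algebraic identity
  have key : ∀ L : ℕ, qnum q (2 * L + 1) / (qnum q L * qnum q (L + 1) + c)
      = d * ((1 - u L ^ 2) / (1 + u L * (c * d ^ 2 - q - q⁻¹) + u L ^ 2)) := by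
    intro L
    have hP0 : (q:ℝ) ^ L ≠ 0 := pow_ne_zero _ hq0.ne'
    have hdq : q - q⁻¹ ≠ 0 := by rw [← hd]; exact hd0.ne'
    have hq2 : q ^ 2 - 1 ≠ 0 := by nlinarith
    have hq2' : q * q - 1 ≠ 0 := by nlinarith
    have hq2'' : (1:ℝ) - q ^ 2 ≠ 0 := by nlinarith
    have hq2''' : (1:ℝ) - q * q ≠ 0 := by nlinarith
    have e1 : q ^ (L + 1) = q ^ L * q := pow_succ q L
    have e2 : q ^ (2 * L + 1) = q ^ L * q ^ L * q := by
      rw [two_mul, pow_add, pow_add, pow_one]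
    have hB : 1 + u L * (c * d ^ 2 - q - q⁻¹) + u L ^ 2
        = d ^ 2 * u L * (qnum q L * qnum q (L + 1) + c) := by
      simp only [qnum, hu, hd, inv_pow, e1, e2]
      set P := q ^ L with hP
      clear_value P
      field_simp [hP0, hq0.ne', hdq, hq2, hq2', hq2'', hq2''']
      ring
    have hN : qnum q (2 * L + 1) = (1 - u L ^ 2) / (d * u L) := by
      simp only [qnum, hu, hd, inv_pow, e1, e2]
      set P := q ^ L with hP
      clear_value P
      field_simp [hP0, hq0.ne', hdq, hq2, hq2', hq2'', hq2''']
    rw [hN, hB, div_div]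
    have h1 := (hu0 L).ne'
    have h2 := (hD L).ne'
    field_simp
  -- the rewritten terms converge to d
  have hulim : Tendsto u atTop (nhds 0) := by
    have h1 : Tendsto (fun n : ℕ => q⁻¹ ^ n) atTop (nhds 0) :=
      tendsto_pow_atTop_nhds_zero_of_lt_one hqi0.le hqi
    have h2 : Tendsto (fun L : ℕ => 2 * L + 1) atTop atTop :=
      tendsto_atTop_mono (fun n => by simp only [id_eq]; omega) tendsto_id
    exact h1.comp h2
  have hnum : Tendsto (fun L => 1 - u L ^ 2) atTop (nhds 1) := by
    have := (tendsto_const_nhds (α := ℕ) (f := atTop) (x := (1:ℝ))).sub (hulim.pow 2)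
    simpa using this
  have hden : Tendsto (fun L => 1 + u L * (c * d ^ 2 - q - q⁻¹) + u L ^ 2) atTop (nhds 1) := by
    have h := ((tendsto_const_nhds (α := ℕ) (f := atTop) (x := (1:ℝ))).add
      (hulim.mul_const (c * d ^ 2 - q - q⁻¹))).add (hulim.pow 2)
    convert h using 2
    norm_num
  have h1 : Tendsto (fun L : ℕ => qnum q (2 * L + 1) / (qnum q L * qnum q (L + 1) + c))
      atTop (nhds d) := by
    have h := (tendsto_const_nhds (α := ℕ) (f := atTop) (x := d)).mul (hnum.div hden one_ne_zero)
    simp only [div_one, mul_one] at h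
    exact Tendsto.congr (fun L => (key L).symm) h
  have h2 : Tendsto (fun N : ℕ =>
      1 / (N : ℝ) *
        ∑ L ∈ Finset.range (N + 1), qnum q (2 * L + 1) / (qnum q L * qnum q (L + 1) + c))
      atTop (nhds d) := by
    have hces := h1.cesaro
    have hshift : Tendsto (fun N : ℕ => ((N + 1 : ℕ) : ℝ)⁻¹ *
        ∑ L ∈ Finset.range (N + 1), qnum q (2 * L + 1) / (qnum q L * qnum q (L + 1) + c))
        atTop (nhds d) := hces.comp (tendsto_add_atTop_nat 1)
    have hrat : Tendsto (fun N : ℕ => ((N : ℝ) + 1) / (N : ℝ)) atTop (nhds 1) := by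
      have h0 := (tendsto_const_nhds (α := ℕ) (f := atTop) (x := (1:ℝ))).add
        tendsto_one_div_atTop_nhds_zero_nat
      rw [add_zero] at h0
      refine h0.congr' ?_
      filter_upwards [eventually_ge_atTop 1] with N hN
      have hN0 : (N : ℝ) ≠ 0 := Nat.cast_ne_zero.2 (by omega)
      field_simp
    have hmul := hshift.mul hrat
    rw [mul_one] at hmul
    refine hmul.congr' ?_
    filter_upwards [eventually_ge_atTop 1] with N hN
    have hN0 : (N : ℝ) ≠ 0 := Nat.cast_ne_zero.2 (by omega)
    have hN1 : ((N : ℝ) + 1) ≠ 0 := by positivity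
    push_cast
    field_simp
  refine ⟨h1, h2, ?_⟩
  have h3 := Filter.Tendsto.pos_mul_atTop hd0 h2 tendsto_natCast_atTop_atTop
  refine h3.congr' ?_
  filter_upwards [eventually_ge_atTop 1] with N hN
  have hN0 : (N : ℝ) ≠ 0 := Nat.cast_ne_zero.2 (by omega)
  field_simp
end

section
/- In every q-deformed oscillator algebra A, the elements Ẑ_i satisfy the radius relation ∑_{i,j} g^{ij} Ẑ_i Ẑ_j = q^{−2} · ([2]_q + N̂) · N̂ / [2]_q, where g is the q-deformed spin-1 metric with nonzero components g^{1,−1} = −q, g^{0,0} = 1, g^{−1,1} = −q^{−1}. -/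
/-! q-deformed oscillator algebra data: spinor indices `Fin 2` (`0 ↔ +`, `1 ↔ −`),
vector indices `Fin 3` (`0 ↔ 1`, `1 ↔ 0`, `2 ↔ −1`). -/

/-- The q-spinor metric with upper indices: `ε^{+−} = q^{1/2}`, `ε^{−+} = −q^{−1/2}`. -/
noncomputable def qEpsU (q : ℝ) : Fin 2 → Fin 2 → ℝ :=
  ![![0, Real.sqrt q], ![-(Real.sqrt q)⁻¹, 0]]

/-- The q-spinor metric with lower indices: `ε_{αβ} = −ε^{αβ}`. -/
noncomputable def qEpsL (q : ℝ) (α β : Fin 2) : ℝ := -qEpsU q α β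

/-- q-Clebsch–Gordan coefficients `σ_i^{αβ}`: nonzero components
`σ_1^{++} = 1`, `σ_0^{+−} = q^{−1/2}/√([2]_q)`, `σ_0^{−+} = q^{1/2}/√([2]_q)`,
`σ_{−1}^{−−} = 1`. -/
noncomputable def qSigma (q : ℝ) : Fin 3 → Fin 2 → Fin 2 → ℝ :=
  ![![![1, 0], ![0, 0]],
    ![![0, (Real.sqrt q)⁻¹ / Real.sqrt (q + q⁻¹)],
      ![Real.sqrt q / Real.sqrt (q + q⁻¹), 0]],
    ![![0, 0], ![0, 1]]]

/-- Antisymmetric projector `(P⁻)^{αβ}_{γδ} = −[2]_q⁻¹ ε^{αβ} ε_{γδ}`. -/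
noncomputable def qPm (q : ℝ) (α β γ δ : Fin 2) : ℝ :=
  -(q + q⁻¹)⁻¹ * qEpsU q α β * qEpsL q γ δ

/-- Symmetric projector `(P⁺)^{αβ}_{γδ} = ∑_i σ_i^{αβ} σ^i_{γδ}`. -/
noncomputable def qPp (q : ℝ) (α β γ δ : Fin 2) : ℝ :=
  ∑ i : Fin 3, qSigma q i α β * qSigma q i γ δ

/-- The R̂-matrix `R̂ = q·P⁺ − q⁻¹·P⁻`. -/
noncomputable def qRhat (q : ℝ) (α β γ δ : Fin 2) : ℝ :=
  q * qPp q α β γ δ - q⁻¹ * qPm q α β γ δ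

/-- `Ẑ_i = ∑_{α,α',β} A^{+α'} ε_{αα'} σ_i^{αβ} A_β`. -/
noncomputable def qZ (q : ℝ) {A : Type*} [Ring A] [Algebra ℝ A]
    (a ad : Fin 2 → A) (i : Fin 3) : A :=
  ∑ α : Fin 2, ∑ α' : Fin 2, ∑ β : Fin 2,
    (qEpsL q α α' * qSigma q i α β) • (ad α' * a β)

/-- The number operator `N̂ = ∑_{α,α',β} A^{+α'} ε_{αα'} ε^{αβ} A_β`. -/
noncomputable def qN (q : ℝ) {A : Type*} [Ring A] [Algebra ℝ A]
    (a ad : Fin 2 → A) : A :=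
  ∑ α : Fin 2, ∑ α' : Fin 2, ∑ β : Fin 2,
    (qEpsL q α α' * qEpsU q α β) • (ad α' * a β)

/-- The hypotheses of a q-deformed oscillator algebra, for annihilation operators
`a` and creation operators `ad`:
`A^{+α} A_β = δ^α_β + q ∑_{γδ} R̂^{αγ}_{βδ} A_γ A^{+δ}`,
`∑_{αβ} (P⁻)^{αβ}_{γδ} A_α A_β = 0`, and `∑_{γδ} (P⁻)^{αβ}_{γδ} A^{+δ} A^{+γ} = 0`. -/
def IsQOscillator (q : ℝ) {A : Type*} [Ring A] [Algebra ℝ A]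
    (a ad : Fin 2 → A) : Prop :=
  (∀ α β : Fin 2, ad α * a β =
      (if α = β then (1 : A) else 0) +
        ∑ γ : Fin 2, ∑ δ : Fin 2, (q * qRhat q α γ β δ) • (a γ * ad δ)) ∧
  (∀ γ δ : Fin 2, ∑ α : Fin 2, ∑ β : Fin 2, qPm q α β γ δ • (a α * a β) = 0) ∧
  (∀ α β : Fin 2, ∑ γ : Fin 2, ∑ δ : Fin 2, qPm q α β γ δ • (ad δ * ad γ) = 0)

/-- The q-deformed spin-1 metric: `g^{1,−1} = −q`, `g^{00} = 1`, `g^{−1,1} = −q⁻¹`. -/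
noncomputable def qG3 (q : ℝ) : Fin 3 → Fin 3 → ℝ :=
  ![![0, 0, -q], ![0, 1, 0], ![-q⁻¹, 0, 0]]

private lemma aux_cancel {A : Type*} [Ring A] [Module ℝ A] {c d : ℝ} {X Y : A}
    (h : c • X + -(d • Y) = 0) (hc : c ≠ 0) : X = (d / c) • Y := by
  have h' : c • X = d • Y := by rwa [add_neg_eq_zero] at h
  calc X = c⁻¹ • (c • X) := (inv_smul_smul₀ hc X).symm
    _ = (d / c) • Y := by rw [h', smul_smul, inv_mul_eq_div]

set_option maxHeartbeats 8000000 in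
/-- Radius relation in every q-deformed oscillator algebra:
`∑_{ij} g^{ij} Ẑ_i Ẑ_j = q⁻² ([2]_q + N̂) N̂ / [2]_q`. -/
theorem qOscillator_radius (q : ℝ) (hq : 0 < q) {A : Type*} [Ring A] [Algebra ℝ A]
    (a ad : Fin 2 → A) (h : IsQOscillator q a ad) :
    ∑ i : Fin 3, ∑ j : Fin 3, qG3 q i j • (qZ q a ad i * qZ q a ad j)
      = (q⁻¹ ^ 2 * (q + q⁻¹)⁻¹) •
          (((q + q⁻¹) • (1 : A) + qN q a ad) * qN q a ad) := by

  obtain ⟨h1, h2, h3⟩ := h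
  have hq0 : q ≠ 0 := hq.ne'
  have hu : (0:ℝ) < q + q⁻¹ := by positivity
  have hs : Real.sqrt q * Real.sqrt q = q := Real.mul_self_sqrt hq.le
  have hb : Real.sqrt (q + q⁻¹) * Real.sqrt (q + q⁻¹) = q + q⁻¹ := Real.mul_self_sqrt hu.le
  have hs0 : Real.sqrt q ≠ 0 := (Real.sqrt_pos.2 hq).ne'
  have hb0 : Real.sqrt (q + q⁻¹) ≠ 0 := (Real.sqrt_pos.2 hu).ne'
  have hc1 : ((q + q⁻¹)⁻¹ * Real.sqrt q * Real.sqrt q) ≠ 0 :=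
    mul_ne_zero (mul_ne_zero (inv_ne_zero hu.ne') hs0) hs0
  -- exchange relations among annihilators / among creators
  have haa : a 0 * a 1 = q⁻¹ • (a 1 * a 0) := by
    have e := h2 0 1
    simp only [qPm, qEpsU, qEpsL, Fin.sum_univ_two] at e
    norm_num at e
    rw [aux_cancel e hc1]
    congr 1
    (generalize hbg : Real.sqrt (q+q⁻¹) = b; generalize hsg : Real.sqrt q = s; rw [hbg] at hb hb0; rw [hsg] at hs hs0; (try rw [← hb]); (try rw [← hs]); (try field_simp); (try ring))
  have hdd : ad 0 * ad 1 = q • (ad 1 * ad 0) := by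
    have e := h3 0 1
    simp only [qPm, qEpsU, qEpsL, Fin.sum_univ_two] at e
    norm_num at e
    have t := aux_cancel e hc1
    rw [t, smul_smul]
    rw [show q * ((q + q⁻¹)⁻¹ * Real.sqrt q * (Real.sqrt q)⁻¹ / ((q + q⁻¹)⁻¹ * Real.sqrt q * Real.sqrt q)) = 1 from by (generalize hbg : Real.sqrt (q+q⁻¹) = b; generalize hsg : Real.sqrt q = s; rw [hbg] at hb hb0; rw [hsg] at hs hs0; (try rw [← hb]); (try rw [← hs]); (try field_simp); (try ring)), one_smul]
  -- the four commutation relations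
  have r00 : ad 0 * a 0 = 1 + (q*q) • (a 0 * ad 0) := by
    have f := h1 0 0
    simp [qRhat, qPp, qPm, qSigma, qEpsU, qEpsL, Fin.sum_univ_two, Fin.sum_univ_three] at f
    rw [f]
    try match_scalars
    all_goals (first | rfl | (generalize hbg : Real.sqrt (q+q⁻¹) = b; generalize hsg : Real.sqrt q = s; rw [hbg] at hb hb0; rw [hsg] at hs hs0; (try rw [← hb]); (try rw [← hs]); (try field_simp); (try ring)))
  have r01 : ad 0 * a 1 = ((q*q+1) * (q+q⁻¹)⁻¹) • (a 1 * ad 0) := by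
    have f := h1 0 1
    simp [qRhat, qPp, qPm, qSigma, qEpsU, qEpsL, Fin.sum_univ_two, Fin.sum_univ_three] at f
    rw [f]
    try match_scalars
    all_goals (first | rfl | (generalize hbg : Real.sqrt (q+q⁻¹) = b; generalize hsg : Real.sqrt q = s; rw [hbg] at hb hb0; rw [hsg] at hs hs0; (try rw [← hb]); (try rw [← hs]); (try field_simp); (try ring)))
  have r10 : ad 1 * a 0 = ((q*q+1) * (q+q⁻¹)⁻¹) • (a 0 * ad 1) := by
    have f := h1 1 0
    simp [qRhat, qPp, qPm, qSigma, qEpsU, qEpsL, Fin.sum_univ_two, Fin.sum_univ_three] at f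
    rw [f]
    try match_scalars
    all_goals (first | rfl | (generalize hbg : Real.sqrt (q+q⁻¹) = b; generalize hsg : Real.sqrt q = s; rw [hbg] at hb hb0; rw [hsg] at hs hs0; (try rw [← hb]); (try rw [← hs]); (try field_simp); (try ring)))
  have r11 : ad 1 * a 1 = 1 + ((q*q*q - q⁻¹) * (q+q⁻¹)⁻¹) • (a 0 * ad 0) + (q*q) • (a 1 * ad 1) := by
    have f := h1 1 1
    simp [qRhat, qPp, qPm, qSigma, qEpsU, qEpsL, Fin.sum_univ_two, Fin.sum_univ_three] at f
    rw [f]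
    try match_scalars
    all_goals (first | rfl | (generalize hbg : Real.sqrt (q+q⁻¹) = b; generalize hsg : Real.sqrt q = s; rw [hbg] at hb hb0; rw [hsg] at hs hs0; (try rw [← hb]); (try rw [← hs]); (try field_simp); (try ring)))
  -- trailing-factor versions
  have haax : ∀ x : A, a 0 * (a 1 * x) = q⁻¹ • (a 1 * (a 0 * x)) := fun x => by
    rw [← mul_assoc, haa, smul_mul_assoc, mul_assoc]
  have hddx : ∀ x : A, ad 0 * (ad 1 * x) = q • (ad 1 * (ad 0 * x)) := fun x => by
    rw [← mul_assoc, hdd, smul_mul_assoc, mul_assoc]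
  have r00x : ∀ x : A, ad 0 * (a 0 * x) = x + (q*q) • (a 0 * (ad 0 * x)) := fun x => by
    rw [← mul_assoc, r00, add_mul, one_mul, smul_mul_assoc, mul_assoc]
  have r01x : ∀ x : A, ad 0 * (a 1 * x) = ((q*q+1) * (q+q⁻¹)⁻¹) • (a 1 * (ad 0 * x)) := fun x => by
    rw [← mul_assoc, r01, smul_mul_assoc, mul_assoc]
  have r10x : ∀ x : A, ad 1 * (a 0 * x) = ((q*q+1) * (q+q⁻¹)⁻¹) • (a 0 * (ad 1 * x)) := fun x => by
    rw [← mul_assoc, r10, smul_mul_assoc, mul_assoc]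
  have r11x : ∀ x : A, ad 1 * (a 1 * x) = x + ((q*q*q - q⁻¹) * (q+q⁻¹)⁻¹) • (a 0 * (ad 0 * x)) + (q*q) • (a 1 * (ad 1 * x)) := fun x => by
    rw [← mul_assoc, r11]
    simp only [add_mul, one_mul, smul_mul_assoc, mul_assoc]
  -- explicit forms of the Z's and N
  have hZ1 : qZ q a ad 0 = (-Real.sqrt q) • (ad 1 * a 0) := by
    simp only [qZ, qEpsL, qEpsU, qSigma, Fin.sum_univ_two, Matrix.cons_val_zero,
      Matrix.cons_val_one, Matrix.head_cons, Matrix.vecHead, Matrix.vecTail]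
    norm_num
  have hZ0 : qZ q a ad 1 = (Real.sqrt (q+q⁻¹))⁻¹ • (ad 0 * a 0) + (-(Real.sqrt (q+q⁻¹))⁻¹) • (ad 1 * a 1) := by
    simp only [qZ, qEpsL, qEpsU, qSigma, Fin.sum_univ_two, Matrix.cons_val_zero,
      Matrix.cons_val_one, Matrix.head_cons, Matrix.vecHead, Matrix.vecTail]
    norm_num
    try match_scalars
    all_goals (first | rfl | (generalize hbg : Real.sqrt (q+q⁻¹) = b; generalize hsg : Real.sqrt q = s; rw [hbg] at hb hb0; rw [hsg] at hs hs0; (try rw [← hb]); (try rw [← hs]); (try field_simp); (try ring)))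
  have hZm1 : qZ q a ad 2 = (Real.sqrt q)⁻¹ • (ad 0 * a 1) := by
    simp only [qZ, qEpsL, qEpsU, qSigma, Fin.sum_univ_two, Matrix.cons_val_zero,
      Matrix.cons_val_one, Matrix.head_cons, Matrix.cons_val_two, Matrix.tail_cons,
      Matrix.vecHead, Matrix.vecTail]
    norm_num
    try match_scalars
    all_goals (first | rfl | (generalize hbg : Real.sqrt (q+q⁻¹) = b; generalize hsg : Real.sqrt q = s; rw [hbg] at hb hb0; rw [hsg] at hs hs0; (try rw [← hb]); (try rw [← hs]); (try field_simp); (try ring)))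
  have hN : qN q a ad = (-q⁻¹) • (ad 0 * a 0) + (-q) • (ad 1 * a 1) := by
    simp only [qN, qEpsL, qEpsU, Fin.sum_univ_two]
    norm_num
    try match_scalars
    all_goals (first | rfl | (generalize hbg : Real.sqrt (q+q⁻¹) = b; generalize hsg : Real.sqrt q = s; rw [hbg] at hb hb0; rw [hsg] at hs hs0; (try rw [← hb]); (try rw [← hs]); (try field_simp); (try ring)))
  -- products of the Z's, with square roots cancelled
  have hP1 : qZ q a ad 0 * qZ q a ad 2 = -((ad 1 * a 0) * (ad 0 * a 1)) := by
    rw [hZ1, hZm1, smul_mul_smul_comm]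
    rw [show (-Real.sqrt q) * (Real.sqrt q)⁻¹ = -1 from by field_simp, neg_one_smul]
  have hP2 : qZ q a ad 2 * qZ q a ad 0 = -((ad 0 * a 1) * (ad 1 * a 0)) := by
    rw [hZm1, hZ1, smul_mul_smul_comm]
    rw [show (Real.sqrt q)⁻¹ * (-Real.sqrt q) = -1 from by field_simp, neg_one_smul]
  have hP0 : qZ q a ad 1 * qZ q a ad 1 =
      (q+q⁻¹)⁻¹ • ((ad 0 * a 0) * (ad 0 * a 0)) + (-(q+q⁻¹)⁻¹) • ((ad 0 * a 0) * (ad 1 * a 1))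
      + (-(q+q⁻¹)⁻¹) • ((ad 1 * a 1) * (ad 0 * a 0)) + (q+q⁻¹)⁻¹ • ((ad 1 * a 1) * (ad 1 * a 1)) := by
    rw [hZ0]
    simp only [add_mul, mul_add, smul_mul_smul_comm]
    try match_scalars
    all_goals (first | rfl | (generalize hbg : Real.sqrt (q+q⁻¹) = b; generalize hsg : Real.sqrt q = s; rw [hbg] at hb hb0; rw [hsg] at hs hs0; (try rw [← hb]); (try rw [← hs]); (try field_simp); (try ring)))
  -- main computation
  simp only [Fin.sum_univ_three, qG3, Matrix.cons_val_zero, Matrix.cons_val_one, Matrix.head_cons,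
    Matrix.cons_val_two, Matrix.tail_cons, zero_smul, add_zero, zero_add,
    hP1, hP2, hP0, hN, one_smul, smul_neg, neg_smul, neg_neg]
  simp only [neg_smul, smul_add, smul_smul, smul_neg, neg_mul, mul_neg, neg_neg, neg_add,
    mul_add, add_mul, mul_one, one_mul, smul_mul_assoc, mul_smul_comm, mul_assoc,
    r00x, r01x, r10x, r11x, haax, hddx, r00, r01, r10, r11, haa, hdd]
  match_scalars
  all_goals field_simp
  all_goals ring
end
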